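/- arXiv:1810.03189 — 2 statements merged into one kernel-verified Lean document; each statement's English description precedes it below -/
import Mathlib

section
/- Transformed equation for h = √(log(A/u)) (identity (2.2) of the paper, Euclidean setting): Let n ≥ 1, a ∈ ℝ, A > 0, let Ω ⊆ ℝⁿ be open and I ⊆ ℝ an open interval, and let u be a smooth function on Ω × I with 0 < u(x,t) < A satisfying ∂_t u = Δu + a·u·log u on Ω × I. Define h = √(log(A/u)); then h is smooth and positive on Ω × I and satisfies ∂_t h = Δh + |∇h|²·(1/h − 2h) − (a/2)·((log A)/h − h) at every point of Ω × I. -/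
open Metric Set

noncomputable def phi (A r : ℝ) : ℝ := Real.sqrt (Real.log (A / r))
noncomputable def phi' (A r : ℝ) : ℝ := -(2 * r * Real.sqrt (Real.log (A / r)))⁻¹
noncomputable def phi'' (A r : ℝ) : ℝ :=
  (2 * r ^ 2 * Real.sqrt (Real.log (A / r)))⁻¹
    - (4 * r ^ 2 * Real.sqrt (Real.log (A / r)) ^ 3)⁻¹

lemma log_pos_of (A r : ℝ) (hA : 0 < A) (hr : 0 < r) (hrA : r < A) :
    0 < Real.log (A / r) :=
  Real.log_pos ((one_lt_div hr).2 hrA)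

lemma phi_hasDeriv {A r : ℝ} (hA : 0 < A) (hr : 0 < r) (hrA : r < A) :
    HasDerivAt (phi A) (phi' A r) r := by
  have hV := log_pos_of A r hA hr hrA
  have hw : 0 < Real.sqrt (Real.log (A / r)) := Real.sqrt_pos.2 hV
  have h1 : HasDerivAt (fun s : ℝ => A / s) (A * -(r ^ 2)⁻¹) r := by
    simpa [div_eq_mul_inv] using (hasDerivAt_inv hr.ne').const_mul A
  have h2 := (Real.hasDerivAt_log (div_pos hA hr).ne').comp r h1
  have h3 := (Real.hasDerivAt_sqrt hV.ne').comp r h2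
  refine h3.congr_deriv ?_
  simp only [phi', Function.comp]
  field_simp

lemma phi'_hasDeriv {A r : ℝ} (hA : 0 < A) (hr : 0 < r) (hrA : r < A) :
    HasDerivAt (phi' A) (phi'' A r) r := by
  have hV := log_pos_of A r hA hr hrA
  have hw : 0 < Real.sqrt (Real.log (A / r)) := Real.sqrt_pos.2 hV
  have W : HasDerivAt (fun s : ℝ => Real.sqrt (Real.log (A / s))) (phi' A r) r :=
    phi_hasDeriv hA hr hrA
  have hq : HasDerivAt (fun s : ℝ => 2 * s * Real.sqrt (Real.log (A / s)))
      (2 * 1 * Real.sqrt (Real.log (A / r)) + 2 * r * phi' A r) r :=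
    ((hasDerivAt_id r).const_mul 2).mul W
  have hqne : 2 * r * Real.sqrt (Real.log (A / r)) ≠ 0 := by positivity
  have := (hq.inv hqne).neg
  refine this.congr_deriv ?_
  simp only [phi'', phi']
  field_simp
  ring

lemma phi_contDiffAt {A r : ℝ} (hA : 0 < A) (hr : 0 < r) (hrA : r < A) :
    ContDiffAt ℝ (⊤ : ℕ∞) (phi A) r := by
  have hV := log_pos_of A r hA hr hrA
  exact (Real.contDiffAt_sqrt hV.ne').comp r
    ((Real.contDiffAt_log.2 (div_pos hA hr).ne').comp r
      (contDiffAt_const.div contDiffAt_id hr.ne'))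

lemma grad_normsq {n : ℕ} (f : EuclideanSpace ℝ (Fin n) → ℝ) (x : EuclideanSpace ℝ (Fin n)) :
    ‖gradient f x‖ ^ 2 = ∑ i : Fin n, (fderiv ℝ f x (EuclideanSpace.single i 1)) ^ 2 := by
  have key : ∀ v : EuclideanSpace ℝ (Fin n),
      fderiv ℝ f x v = (inner ℝ (gradient f x) v : ℝ) := by
    intro v
    rw [gradient, InnerProductSpace.toDual_symm_apply]
  rw [← real_inner_self_eq_norm_sq, PiLp.inner_apply]
  refine Finset.sum_congr rfl fun i _ => ?_
  rw [key (EuclideanSpace.single i 1), EuclideanSpace.inner_single_right]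
  simp [pow_two]

/-- The spatial Laplacian: the trace of the second derivative, computed in the
standard orthonormal basis of Euclidean space. -/
noncomputable def lapl {n : ℕ} (f : EuclideanSpace ℝ (Fin n) → ℝ)
    (x : EuclideanSpace ℝ (Fin n)) : ℝ :=
  ∑ i : Fin n, iteratedFDeriv ℝ 2 f x ![EuclideanSpace.single i 1, EuclideanSpace.single i 1]

/-- The transformed function `h = √(log (A / u))`. -/
noncomputable def hfun {n : ℕ} (A : ℝ) (u : EuclideanSpace ℝ (Fin n) → ℝ → ℝ)
    (x : EuclideanSpace ℝ (Fin n)) (t : ℝ) : ℝ :=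
  Real.sqrt (Real.log (A / u x t))

/-- The evolution equation (2.2) satisfied by `h = √(log(A/u))` when
`u_t = Δu + a u log u` and `0 < u < A` (identity (2.2) of the paper). -/
theorem transformed_equation (n : ℕ) (hn : 1 ≤ n) (a A : ℝ) (hA : 0 < A)
    (Ω : Set (EuclideanSpace ℝ (Fin n))) (I : Set ℝ)
    (hΩ : IsOpen Ω) (hIopen : IsOpen I) (hIconn : I.OrdConnected)
    (u : EuclideanSpace ℝ (Fin n) → ℝ → ℝ)
    (hsmooth : ContDiffOn ℝ (⊤ : ℕ∞) (fun p => u p.1 p.2) (Ω ×ˢ I))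
    (hbound : ∀ x ∈ Ω, ∀ t ∈ I, 0 < u x t ∧ u x t < A)
    (heq : ∀ x ∈ Ω, ∀ t ∈ I,
      deriv (u x) t = lapl (fun y => u y t) x + a * u x t * Real.log (u x t)) :
    ContDiffOn ℝ (⊤ : ℕ∞) (fun p => hfun A u p.1 p.2) (Ω ×ˢ I) ∧
    ∀ x ∈ Ω, ∀ t ∈ I,
      0 < hfun A u x t ∧
      deriv (hfun A u x) t =
        lapl (fun y => hfun A u y t) x +
          ‖gradient (fun y => hfun A u y t) x‖ ^ 2 *
            (1 / hfun A u x t - 2 * hfun A u x t) -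
          a / 2 * (Real.log A / hfun A u x t - hfun A u x t) := by
  constructor
  · intro p hp
    have hp1 : p.1 ∈ Ω := hp.1
    have hp2 : p.2 ∈ I := hp.2
    obtain ⟨hu0, huA⟩ := hbound p.1 hp1 p.2 hp2
    have hu : ContDiffAt ℝ (⊤ : ℕ∞) (fun p => u p.1 p.2) p :=
      hsmooth.contDiffAt ((hΩ.prod hIopen).mem_nhds hp)
    exact ((phi_contDiffAt hA hu0 huA).comp p hu).contDiffWithinAt
  · intro x hx t ht
    obtain ⟨hs0, hsA⟩ := hbound x hx t ht
    set s : ℝ := u x t with hs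
    have hV : 0 < Real.log (A / s) := log_pos_of A s hA hs0 hsA
    have hw0 : 0 < hfun A u x t := Real.sqrt_pos.2 hV
    refine ⟨hw0, ?_⟩
    set g : EuclideanSpace ℝ (Fin n) → ℝ := fun y => u y t with hgdef
    have hgC : ContDiffOn ℝ (⊤ : ℕ∞) g Ω := by
      have : ContDiff ℝ (⊤ : ℕ∞) (fun y : EuclideanSpace ℝ (Fin n) => (y, t)) :=
        contDiff_id.prodMk contDiff_const
      exact hsmooth.comp this.contDiffOn (fun y hy => ⟨hy, ht⟩)
    have hgdiff : ∀ y ∈ Ω, HasFDerivAt g (fderiv ℝ g y) y := fun y hy =>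
      (((hgC.contDiffAt (hΩ.mem_nhds hy)).differentiableAt (by simp))).hasFDerivAt
    have hev : ∀ y ∈ Ω, fderiv ℝ (fun z => phi A (g z)) y = phi' A (g y) • fderiv ℝ g y := by
      intro y hy
      obtain ⟨hy0, hyA⟩ := hbound y hy t ht
      exact ((phi_hasDeriv hA hy0 hyA).comp_hasFDerivAt y (hgdiff y hy)).fderiv
    have hg2 : HasFDerivAt (fderiv ℝ g) (fderiv ℝ (fderiv ℝ g) x) x :=
      (((hgC.fderiv_of_isOpen (m := ((⊤ : ℕ∞) : WithTop ℕ∞)) hΩ (by exact_mod_cast le_top)).contDiffAt (hΩ.mem_nhds hx)).differentiableAt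
        (by simp : ((⊤ : ℕ∞) : WithTop ℕ∞) ≠ 0)).hasFDerivAt
    have hc : HasFDerivAt (fun y => phi' A (g y)) (phi'' A s • fderiv ℝ g x) x :=
      (phi'_hasDeriv hA hs0 hsA).comp_hasFDerivAt (h₂ := phi' A) (f := g) x (hgdiff x hx)
    have hD : HasFDerivAt (fun y => phi' A (g y) • fderiv ℝ g y)
        (phi' A s • fderiv ℝ (fderiv ℝ g) x
          + (phi'' A s • fderiv ℝ g x).smulRight (fderiv ℝ g x)) x := hc.smul hg2
    have hfd2 : fderiv ℝ (fderiv ℝ (fun z => phi A (g z))) x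
        = phi' A s • fderiv ℝ (fderiv ℝ g) x
          + (phi'' A s • fderiv ℝ g x).smulRight (fderiv ℝ g x) := by
      have hEE : fderiv ℝ (fun z => phi A (g z)) =ᶠ[nhds x]
          fun y => phi' A (g y) • fderiv ℝ g y := by
        filter_upwards [hΩ.mem_nhds hx] with y hy using hev y hy
      rw [hEE.fderiv_eq, hD.fderiv]
    set G : ℝ := ∑ i : Fin n, (fderiv ℝ g x (EuclideanSpace.single i 1)) ^ 2 with hG
    have hlaplh : lapl (fun y => hfun A u y t) x = phi' A s * lapl g x + phi'' A s * G := by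
      show lapl (fun z => phi A (g z)) x = _
      unfold lapl
      rw [hG, Finset.mul_sum, Finset.mul_sum, ← Finset.sum_add_distrib]
      refine Finset.sum_congr rfl fun i _ => ?_
      rw [iteratedFDeriv_two_apply, iteratedFDeriv_two_apply, hfd2]
      simp only [Matrix.cons_val_zero, Matrix.cons_val_one, Matrix.head_cons,
        ContinuousLinearMap.add_apply, ContinuousLinearMap.smul_apply,
        ContinuousLinearMap.smulRight_apply, smul_eq_mul]
      ring
    have hgradh : ‖gradient (fun y => hfun A u y t) x‖ ^ 2 = phi' A s ^ 2 * G := by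
      show ‖gradient (fun z => phi A (g z)) x‖ ^ 2 = _
      rw [grad_normsq, hG, Finset.mul_sum]
      refine Finset.sum_congr rfl fun i _ => ?_
      rw [hev x hx]
      simp only [ContinuousLinearMap.smul_apply, smul_eq_mul]
      ring
    have hut : HasDerivAt (u x) (deriv (u x) t) t := by
      have hc : ContDiffAt ℝ (⊤ : ℕ∞) (fun τ => u x τ) t :=
        (hsmooth.contDiffAt ((hΩ.prod hIopen).mem_nhds ⟨hx, ht⟩)).comp t
          (contDiffAt_const.prodMk contDiffAt_id)
      exact (hc.differentiableAt (by simp)).hasDerivAt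
    have hht : deriv (hfun A u x) t = phi' A s * deriv (u x) t :=
      (((phi_hasDeriv hA hs0 hsA).comp t hut)).deriv
    rw [hht, hlaplh, hgradh, heq x hx t ht]
    have hw2 : hfun A u x t ^ 2 = Real.log A - Real.log s := by
      show Real.sqrt (Real.log (A / s)) ^ 2 = _
      rw [Real.sq_sqrt hV.le, Real.log_div hA.ne' hs0.ne']
    have hphi' : phi' A s = -(2 * s * hfun A u x t)⁻¹ := rfl
    have hphi'' : phi'' A s = (2 * s ^ 2 * hfun A u x t)⁻¹
        - (4 * s ^ 2 * hfun A u x t ^ 3)⁻¹ := rfl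
    have hlogs : Real.log s = Real.log A - hfun A u x t ^ 2 := by linarith
    set w : ℝ := hfun A u x t with hwdef
    rw [hphi', hphi'', hlogs]
    have hL : lapl g x = lapl (fun y => u y t) x := rfl
    field_simp
    ring
end

section
/- Differential inequality for w = |∇h|² (Euclidean case of Lemma 2.1, where K = 0): Let n ≥ 1, a ∈ ℝ, A > 0, let Ω ⊆ ℝⁿ be open and I ⊆ ℝ an open interval, and let u be a smooth function on Ω × I with 0 < u(x,t) < A satisfying ∂_t u = Δu + a·u·log u on Ω × I. Set h = √(log(A/u)) and w = |∇h|². Then at every point of Ω × I, Δw − ∂_t w ≥ −[ max{a, 0} + (1/h²)·max{a·log A, 0} ]·w + 2·(2h − 1/h)·⟨∇w, ∇h⟩ + 2·(2 + 1/h²)·w². -/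
open Metric Set
open scoped RealInnerProductSpace

/-- The squared norm of the spatial gradient of `h`, `w = |∇h|²`. -/
noncomputable def wfun {n : ℕ} (A : ℝ) (u : EuclideanSpace ℝ (Fin n) → ℝ → ℝ)
    (x : EuclideanSpace ℝ (Fin n)) (t : ℝ) : ℝ :=
  ‖gradient (fun y => hfun A u y t) x‖ ^ 2

open Filter Topology
set_option linter.unusedSectionVars false

section auxgen
variable {E' F' : Type*} [NormedAddCommGroup E'] [NormedSpace ℝ E']
  [NormedAddCommGroup F'] [NormedSpace ℝ F']

lemma one_le_coe_top : (1 : WithTop ℕ∞) ≤ ((⊤ : ℕ∞) : WithTop ℕ∞) := by norm_cast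

lemma two_le_coe_top : (2 : WithTop ℕ∞) ≤ ((⊤ : ℕ∞) : WithTop ℕ∞) := by norm_cast

/-- Directional derivative. -/
noncomputable def pd (v : E') (f : E' → ℝ) (q : E') : ℝ := fderiv ℝ f q v

lemma pd_congr {f g : E' → ℝ} {q : E'} (h : f =ᶠ[𝓝 q] g) (v : E') : pd v f q = pd v g q := by
  unfold pd; rw [h.fderiv_eq]

lemma contDiffOn_diffAt {f : E' → F'} {s : Set E'} (hf : ContDiffOn ℝ (⊤ : ℕ∞) f s)
    (hs : IsOpen s) {q : E'} (hq : q ∈ s) : DifferentiableAt ℝ f q :=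
  ((hf.differentiableOn (zero_lt_one.trans_le one_le_coe_top).ne').differentiableAt (hs.mem_nhds hq))

lemma contDiffOn_fderiv {f : E' → ℝ} {s : Set E'} (hf : ContDiffOn ℝ (⊤ : ℕ∞) f s)
    (hs : IsOpen s) : ContDiffOn ℝ (⊤ : ℕ∞) (fderiv ℝ f) s :=
  hf.fderiv_of_isOpen hs (by rw [ENat.coe_top_add_one])

lemma ContDiffOn.pd {f : E' → ℝ} {s : Set E'} (hf : ContDiffOn ℝ (⊤ : ℕ∞) f s)
    (hs : IsOpen s) (v : E') : ContDiffOn ℝ (⊤ : ℕ∞) (pd v f) s :=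
  (ContinuousLinearMap.apply ℝ ℝ v).contDiff.comp_contDiffOn (contDiffOn_fderiv hf hs)

lemma pd_pd_eq {f : E' → ℝ} {q : E'} (hdf : DifferentiableAt ℝ (fderiv ℝ f) q) (v w : E') :
    pd w (pd v f) q = fderiv ℝ (fderiv ℝ f) q w v := by
  have h : HasFDerivAt (pd v f)
      ((ContinuousLinearMap.apply ℝ ℝ v).comp (fderiv ℝ (fderiv ℝ f) q)) q :=
    (ContinuousLinearMap.apply ℝ ℝ v).hasFDerivAt.comp q hdf.hasFDerivAt
  simp [pd, h.fderiv]

lemma pd_comm {f : E' → ℝ} {s : Set E'} (hf : ContDiffOn ℝ (⊤ : ℕ∞) f s) (hs : IsOpen s)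
    {q : E'} (hq : q ∈ s) (v w : E') : pd w (pd v f) q = pd v (pd w f) q := by
  have hdf : DifferentiableAt ℝ (fderiv ℝ f) q :=
    contDiffOn_diffAt (contDiffOn_fderiv hf hs) hs hq
  rw [pd_pd_eq hdf, pd_pd_eq hdf]
  exact (hf.contDiffAt (hs.mem_nhds hq)).isSymmSndFDerivAt
    (by rw [minSmoothness_of_isRCLikeNormedField]; exact two_le_coe_top) w v

lemma pd_add {f g : E' → ℝ} {q : E'} (hf : DifferentiableAt ℝ f q)
    (hg : DifferentiableAt ℝ g q) (v : E') :
    pd v (fun q => f q + g q) q = pd v f q + pd v g q := by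
  simp [pd, fderiv_fun_add hf hg]

lemma pd_sub {f g : E' → ℝ} {q : E'} (hf : DifferentiableAt ℝ f q)
    (hg : DifferentiableAt ℝ g q) (v : E') :
    pd v (fun q => f q - g q) q = pd v f q - pd v g q := by
  simp [pd, fderiv_fun_sub hf hg]

lemma pd_neg {f : E' → ℝ} {q : E'} (v : E') :
    pd v (fun q => -(f q)) q = -pd v f q := by
  simp [pd, fderiv_neg]

lemma pd_mul {f g : E' → ℝ} {q : E'} (hf : DifferentiableAt ℝ f q)
    (hg : DifferentiableAt ℝ g q) (v : E') :
    pd v (fun q => f q * g q) q = f q * pd v g q + g q * pd v f q := by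
  simp only [pd, fderiv_fun_mul hf hg, ContinuousLinearMap.add_apply,
    ContinuousLinearMap.smul_apply, smul_eq_mul]
  try ring

lemma pd_const_mul {f : E' → ℝ} {q : E'} (hf : DifferentiableAt ℝ f q) (c : ℝ) (v : E') :
    pd v (fun q => c * f q) q = c * pd v f q := by
  simp [pd, fderiv_const_mul hf c]

lemma pd_const (c : ℝ) (q v : E') : pd v (fun _ => c) q = 0 := by
  simp [pd]

lemma pd_inv {g : E' → ℝ} {q : E'} (hg : DifferentiableAt ℝ g q) (hg0 : g q ≠ 0) (v : E') :
    pd v (fun q => (g q)⁻¹) q = -pd v g q / (g q)^2 := by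
  have h : HasFDerivAt (fun q => (g q)⁻¹) ((-(g q ^ 2)⁻¹) • fderiv ℝ g q) q :=
    (hasDerivAt_inv hg0).comp_hasFDerivAt q hg.hasFDerivAt
  rw [pd, h.fderiv]
  simp [pd]
  ring

lemma pd_div {f g : E' → ℝ} {q : E'} (hf : DifferentiableAt ℝ f q)
    (hg : DifferentiableAt ℝ g q) (hg0 : g q ≠ 0) (v : E') :
    pd v (fun q => f q / g q) q = (pd v f q * g q - f q * pd v g q) / (g q)^2 := by
  have hinv : pd v (fun q => (g q)⁻¹) q = -pd v g q / (g q)^2 := pd_inv hg hg0 v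
  have : (fun q => f q / g q) = fun q => f q * (g q)⁻¹ := by ext q; rw [div_eq_mul_inv]
  rw [this, pd_mul hf (hg.fun_inv hg0), hinv]
  field_simp
  ring

lemma diffAt_div {f g : E' → ℝ} {q : E'} (hf : DifferentiableAt ℝ f q)
    (hg : DifferentiableAt ℝ g q) (hg0 : g q ≠ 0) :
    DifferentiableAt ℝ (fun q => f q / g q) q := by
  have : (fun q => f q / g q) = fun q => f q * (g q)⁻¹ := by
    funext q; rw [div_eq_mul_inv]
  rw [this]; exact hf.mul (hg.inv hg0)

lemma pd_sum {ι : Type*} (t : Finset ι) {f : ι → E' → ℝ} {q : E'}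
    (hf : ∀ i ∈ t, DifferentiableAt ℝ (f i) q) (v : E') :
    pd v (fun q => ∑ i ∈ t, f i q) q = ∑ i ∈ t, pd v (f i) q := by
  simp [pd, fderiv_fun_sum hf]

lemma pd_sq {f : E' → ℝ} {q : E'} (hf : DifferentiableAt ℝ f q) (v : E') :
    pd v (fun q => (f q)^2) q = 2 * f q * pd v f q := by
  have : (fun q => (f q)^2) = fun q => f q * f q := by ext q; ring
  rw [this, pd_mul hf hf]; ring

lemma pd_log {g : E' → ℝ} {q : E'} (hg : DifferentiableAt ℝ g q) (hg0 : g q ≠ 0) (v : E') :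
    pd v (fun q => Real.log (g q)) q = pd v g q / g q := by
  have h : HasFDerivAt (fun q => Real.log (g q)) ((g q)⁻¹ • fderiv ℝ g q) q :=
    (Real.hasDerivAt_log hg0).comp_hasFDerivAt q hg.hasFDerivAt
  rw [pd, h.fderiv]
  simp [pd]
  ring

lemma pd_sqrt {g : E' → ℝ} {q : E'} (hg : DifferentiableAt ℝ g q) (hg0 : g q ≠ 0) (v : E') :
    pd v (fun q => Real.sqrt (g q)) q = pd v g q / (2 * Real.sqrt (g q)) := by
  have h : HasFDerivAt (fun q => Real.sqrt (g q)) ((1 / (2 * Real.sqrt (g q))) • fderiv ℝ g q) q :=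
    (Real.hasDerivAt_sqrt hg0).comp_hasFDerivAt q hg.hasFDerivAt
  rw [pd, h.fderiv]
  simp [pd]
  ring

lemma pd_slice_fst {G : E' × ℝ → ℝ} {x : E'} {t : ℝ} (hG : DifferentiableAt ℝ G (x, t)) (v : E') :
    fderiv ℝ (fun y => G (y, t)) x v = pd (v, 0) G (x, t) := by
  have h : HasFDerivAt (fun y => G (y, t))
      ((fderiv ℝ G (x, t)).comp ((ContinuousLinearMap.id ℝ E').prod 0)) x :=
    hG.hasFDerivAt.comp x ((hasFDerivAt_id x).prodMk (hasFDerivAt_const t x))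
  rw [h.fderiv]; simp [pd]

lemma deriv_slice_snd {G : E' × ℝ → ℝ} {x : E'} {t : ℝ} (hG : DifferentiableAt ℝ G (x, t)) :
    deriv (fun s => G (x, s)) t = pd (0, 1) G (x, t) := by
  have h : HasFDerivAt (fun s : ℝ => G (x, s))
      ((fderiv ℝ G (x, t)).comp ((0 : ℝ →L[ℝ] E').prod (ContinuousLinearMap.id ℝ ℝ))) t :=
    hG.hasFDerivAt.comp t ((hasFDerivAt_const x t).prodMk (hasFDerivAt_id t))
  rw [h.hasDerivAt.deriv]; simp [pd]

end auxgen

section auxeuc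
variable {n : ℕ}
local notation "E" => EuclideanSpace ℝ (Fin n)
local notation "sgl" i => EuclideanSpace.single i (1:ℝ)

lemma inner_gradient (f : E → ℝ) (x v : E) : ⟪gradient f x, v⟫ = fderiv ℝ f x v := by
  rw [gradient]
  exact InnerProductSpace.toDual_symm_apply (x := v) (y := fderiv ℝ f x)

lemma gradient_apply (f : E → ℝ) (x : E) (i : Fin n) :
    gradient f x i = fderiv ℝ f x (sgl i) := by
  rw [← inner_gradient f x (sgl i), EuclideanSpace.inner_single_right]
  simp

lemma norm_sq_gradient (f : E → ℝ) (x : E) :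
    ‖gradient f x‖^2 = ∑ i, (fderiv ℝ f x (sgl i))^2 := by
  have h1 : ‖gradient f x‖^2 = ∑ i, (gradient f x i)^2 := by
    rw [EuclideanSpace.norm_eq, Real.sq_sqrt (by positivity)]
    simp [sq_abs]
  rw [h1]
  exact Finset.sum_congr rfl fun i _ => by rw [gradient_apply]

lemma inner_gradient_gradient (f g : E → ℝ) (x : E) :
    ⟪gradient f x, gradient g x⟫ = ∑ i, fderiv ℝ f x (sgl i) * fderiv ℝ g x (sgl i) := by
  rw [PiLp.inner_apply]
  exact Finset.sum_congr rfl fun i _ => by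
    rw [gradient_apply, gradient_apply]; simp; ring

lemma lapl_eq {f : E → ℝ} {x : E} (hdf : DifferentiableAt ℝ (fderiv ℝ f) x) :
    lapl f x = ∑ i, pd (sgl i) (pd (sgl i) f) x := by
  unfold lapl
  congr 1; ext i
  rw [iteratedFDeriv_two_apply, pd_pd_eq hdf]
  simp

lemma lapl_congr {f g : E → ℝ} {x : E} (h : f =ᶠ[𝓝 x] g) : lapl f x = lapl g x := by
  unfold lapl
  congr 1; ext i
  rw [iteratedFDeriv_two_apply, iteratedFDeriv_two_apply, h.fderiv.fderiv_eq]

/-- Laplacian of a spatial slice of a space-time function. -/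
lemma lapl_slice {s : Set ((EuclideanSpace ℝ (Fin n)) × ℝ)} (hs : IsOpen s)
    {G : (EuclideanSpace ℝ (Fin n)) × ℝ → ℝ} (hG : ContDiffOn ℝ (⊤ : ℕ∞) G s)
    {x : E} {t : ℝ} (hxt : (x, t) ∈ s) {f : E → ℝ} (hf : ∀ᶠ y in 𝓝 x, f y = G (y, t)) :
    lapl f x = ∑ j, pd ((sgl j), (0:ℝ)) (pd ((sgl j), (0:ℝ)) G) (x, t) := by
  have hσ : ContDiff ℝ (⊤ : ℕ∞) (fun y : E => (y, t)) := contDiff_id.prodMk contDiff_const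
  have hΩ' : IsOpen {y : E | (y, t) ∈ s} := hs.preimage (continuous_id.prodMk continuous_const)
  have hxΩ' : x ∈ {y : E | (y, t) ∈ s} := hxt
  have hslice : ContDiffOn ℝ (⊤ : ℕ∞) (fun y : E => G (y, t)) {y : E | (y, t) ∈ s} :=
    hG.comp hσ.contDiffOn (fun y hy => hy)
  have h1 : lapl f x = lapl (fun y : E => G (y, t)) x := lapl_congr hf
  rw [h1, lapl_eq (contDiffOn_diffAt (contDiffOn_fderiv hslice hΩ') hΩ' hxΩ')]
  refine Finset.sum_congr rfl fun j _ => ?_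
  have hinner : ∀ y ∈ {y : E | (y, t) ∈ s},
      pd (sgl j) (fun y : E => G (y, t)) y = pd ((sgl j), (0:ℝ)) G (y, t) := by
    intro y hy
    exact pd_slice_fst (contDiffOn_diffAt hG hs hy) _
  have hev : (pd (sgl j) (fun y : E => G (y, t))) =ᶠ[𝓝 x]
      (fun y => pd ((sgl j), (0:ℝ)) G (y, t)) :=
    Filter.eventuallyEq_of_mem (hΩ'.mem_nhds hxΩ') hinner
  rw [pd_congr hev]
  exact pd_slice_fst (contDiffOn_diffAt (hG.pd hs _) hs hxt) _

end auxeuc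

section core
variable {n : ℕ}

noncomputable def eps (i : Fin n) : (EuclideanSpace ℝ (Fin n)) × ℝ := (EuclideanSpace.single i 1, 0)

noncomputable def tau {n : ℕ} : (EuclideanSpace ℝ (Fin n)) × ℝ := (0, 1)

variable (a A : ℝ) (U : (EuclideanSpace ℝ (Fin n)) × ℝ → ℝ)

noncomputable def Ff : (EuclideanSpace ℝ (Fin n)) × ℝ → ℝ := fun q => Real.log A - Real.log (U q)

noncomputable def Hf : (EuclideanSpace ℝ (Fin n)) × ℝ → ℝ := fun q => Real.sqrt (Ff A U q)

noncomputable def Wf : (EuclideanSpace ℝ (Fin n)) × ℝ → ℝ :=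
  fun q => ∑ i, (pd (eps i) (Hf A U) q)^2

noncomputable def Gf : (EuclideanSpace ℝ (Fin n)) × ℝ → ℝ := fun q =>
  -(2 * Hf A U q * Wf A U q) + Wf A U q / Hf A U q + a * Hf A U q / 2
    - a * Real.log A / (2 * Hf A U q)

variable {s : Set ((EuclideanSpace ℝ (Fin n)) × ℝ)} {a A U}
variable (hs : IsOpen s) (hA : 0 < A) (hU : ContDiffOn ℝ (⊤ : ℕ∞) U s)
  (hUpos : ∀ q ∈ s, 0 < U q) (hUA : ∀ q ∈ s, U q < A)

include hs hA hU hUpos hUA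

lemma Ff_pos : ∀ q ∈ s, 0 < Ff A U q := by
  intro q hq
  have := Real.log_lt_log (hUpos q hq) (hUA q hq)
  simp only [Ff]; linarith

lemma Ff_smooth : ContDiffOn ℝ (⊤ : ℕ∞) (Ff A U) s :=
  contDiffOn_const.sub (hU.log (fun q hq => ne_of_gt (hUpos q hq)))

lemma Hf_pos : ∀ q ∈ s, 0 < Hf A U q := fun q hq =>
  Real.sqrt_pos.2 (Ff_pos hs hA hU hUpos hUA q hq)

lemma Hf_sq : ∀ q ∈ s, (Hf A U q)^2 = Ff A U q := fun q hq =>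
  Real.sq_sqrt (le_of_lt (Ff_pos hs hA hU hUpos hUA q hq))

lemma Hf_smooth : ContDiffOn ℝ (⊤ : ℕ∞) (Hf A U) s := by
  intro q hq
  exact (((Ff_smooth hs hA hU hUpos hUA q hq).contDiffAt
    (hs.mem_nhds hq)).sqrt (ne_of_gt (Ff_pos hs hA hU hUpos hUA q hq))).contDiffWithinAt

lemma Wf_smooth : ContDiffOn ℝ (⊤ : ℕ∞) (Wf A U) s := by
  apply ContDiffOn.sum
  intro i _
  exact ((Hf_smooth hs hA hU hUpos hUA).pd hs (eps i)).pow 2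

lemma dF : ∀ q ∈ s, ∀ v, pd v (Ff A U) q = -(pd v U q / U q) := by
  intro q hq v
  have hdU : DifferentiableAt ℝ U q := contDiffOn_diffAt hU hs hq
  have hne : U q ≠ 0 := ne_of_gt (hUpos q hq)
  have h1 : pd v (fun r => Real.log A - Real.log (U r)) q
      = pd v (fun _ => Real.log A) q - pd v (fun r => Real.log (U r)) q :=
    pd_sub (differentiableAt_const _) (hdU.log hne) v
  have h2 : pd v (fun r => Real.log (U r)) q = pd v U q / U q := pd_log hdU hne v
  show pd v (fun r => Real.log A - Real.log (U r)) q = _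
  rw [h1, h2, pd_const]
  ring

lemma dH : ∀ q ∈ s, ∀ v, pd v (Hf A U) q = pd v (Ff A U) q / (2 * Hf A U q) := by
  intro q hq v
  have hdF : DifferentiableAt ℝ (Ff A U) q :=
    contDiffOn_diffAt (Ff_smooth hs hA hU hUpos hUA) hs hq
  have hne : Ff A U q ≠ 0 := ne_of_gt (Ff_pos hs hA hU hUpos hUA q hq)
  exact pd_sqrt hdF hne v

lemma dW : ∀ q ∈ s, ∀ v, pd v (Wf A U) q
    = 2 * ∑ i, pd (eps i) (Hf A U) q * pd v (pd (eps i) (Hf A U)) q := by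
  intro q hq v
  have hdD : ∀ i : Fin n, DifferentiableAt ℝ (pd (eps i) (Hf A U)) q := fun i =>
    contDiffOn_diffAt ((Hf_smooth hs hA hU hUpos hUA).pd hs (eps i)) hs hq
  have h1 : pd v (Wf A U) q = ∑ i, pd v (fun r => (pd (eps i) (Hf A U) r)^2) q :=
    pd_sum Finset.univ (fun i _ => (hdD i).pow 2) v
  rw [h1, Finset.mul_sum]
  refine Finset.sum_congr rfl fun i _ => ?_
  rw [pd_sq (hdD i) v]; ring

lemma dFF : ∀ q ∈ s, ∀ i, pd (eps i) (pd (eps i) (Ff A U)) q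
    = -(pd (eps i) (pd (eps i) U) q / U q) + (pd (eps i) U q)^2 / (U q)^2 := by
  intro q hq i
  have hev : (pd (eps i) (Ff A U)) =ᶠ[𝓝 q] (fun r => -(pd (eps i) U r / U r)) :=
    Filter.eventuallyEq_of_mem (hs.mem_nhds hq)
      (fun r hr => dF hs hA hU hUpos hUA r hr (eps i))
  have hdDU : DifferentiableAt ℝ (pd (eps i) U) q :=
    contDiffOn_diffAt (hU.pd hs (eps i)) hs hq
  have hdU : DifferentiableAt ℝ U q := contDiffOn_diffAt hU hs hq
  have hne : U q ≠ 0 := ne_of_gt (hUpos q hq)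
  rw [pd_congr hev, pd_neg, pd_div hdDU hdU hne]
  field_simp
  ring

lemma dHH : ∀ q ∈ s, ∀ i, pd (eps i) (pd (eps i) (Hf A U)) q
    = pd (eps i) (pd (eps i) (Ff A U)) q / (2 * Hf A U q)
      - (pd (eps i) (Ff A U) q)^2 / (4 * (Hf A U q)^3) := by
  intro q hq i
  have hev : (pd (eps i) (Hf A U)) =ᶠ[𝓝 q]
      (fun r => pd (eps i) (Ff A U) r / (2 * Hf A U r)) :=
    Filter.eventuallyEq_of_mem (hs.mem_nhds hq)
      (fun r hr => dH hs hA hU hUpos hUA r hr (eps i))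
  have hdDF : DifferentiableAt ℝ (pd (eps i) (Ff A U)) q :=
    contDiffOn_diffAt ((Ff_smooth hs hA hU hUpos hUA).pd hs (eps i)) hs hq
  have hdH : DifferentiableAt ℝ (Hf A U) q :=
    contDiffOn_diffAt (Hf_smooth hs hA hU hUpos hUA) hs hq
  have hHne : Hf A U q ≠ 0 := ne_of_gt (Hf_pos hs hA hU hUpos hUA q hq)
  have h2ne : 2 * Hf A U q ≠ 0 := by simp [hHne] 
  rw [pd_congr hev, pd_div hdDF ((differentiableAt_const (2:ℝ)).fun_mul hdH) h2ne,
    pd_const_mul hdH 2, dH hs hA hU hUpos hUA q hq (eps i)]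
  field_simp
  ring

lemma Gf_smooth : ContDiffOn ℝ (⊤ : ℕ∞) (Gf a A U) s := by
  have hH := Hf_smooth hs hA hU hUpos hUA
  have hW := Wf_smooth hs hA hU hUpos hUA
  have hne : ∀ q ∈ s, Hf A U q ≠ 0 := fun q hq => ne_of_gt (Hf_pos hs hA hU hUpos hUA q hq)
  have h2ne : ∀ q ∈ s, 2 * Hf A U q ≠ 0 := fun q hq => by
    have := hne q hq; positivity
  exact ((((contDiffOn_const.mul hH).mul hW).neg.add (hW.div hH hne)).add
    ((contDiffOn_const.mul hH).div_const 2)).sub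
      (contDiffOn_const.div (contDiffOn_const.mul hH) h2ne)

lemma dG : ∀ q ∈ s, ∀ v, pd v (Gf a A U) q
    = (-(2 * Wf A U q) - Wf A U q / (Hf A U q)^2 + a / 2
        + a * Real.log A / 2 * (1 / (Hf A U q)^2)) * pd v (Hf A U) q
      + (-(2 * Hf A U q) + 1 / Hf A U q) * pd v (Wf A U) q := by
  intro q hq v
  have hdH : DifferentiableAt ℝ (Hf A U) q :=
    contDiffOn_diffAt (Hf_smooth hs hA hU hUpos hUA) hs hq
  have hdW : DifferentiableAt ℝ (Wf A U) q :=
    contDiffOn_diffAt (Wf_smooth hs hA hU hUpos hUA) hs hq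
  have hHne : Hf A U q ≠ 0 := ne_of_gt (Hf_pos hs hA hU hUpos hUA q hq)
  have h2ne : 2 * Hf A U q ≠ 0 := by simp [hHne]
  have hd1 : DifferentiableAt ℝ (fun r => -(2 * Hf A U r * Wf A U r)) q :=
    (((differentiableAt_const (2:ℝ)).mul hdH).mul hdW).neg
  have hd2 : DifferentiableAt ℝ (fun r => Wf A U r / Hf A U r) q := diffAt_div hdW hdH hHne
  have hd3 : DifferentiableAt ℝ (fun r => a * Hf A U r / 2) q :=
    diffAt_div ((differentiableAt_const a).mul hdH) (differentiableAt_const 2) two_ne_zero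
  have e1 : pd v (fun r => -(2 * Hf A U r * Wf A U r)) q
      = -((2 * Hf A U q) * pd v (Wf A U) q + Wf A U q * (2 * pd v (Hf A U) q)) := by
    rw [pd_neg, pd_mul ((differentiableAt_const (2:ℝ)).fun_mul hdH) hdW, pd_const_mul hdH 2]
  have e2 : pd v (fun r => Wf A U r / Hf A U r) q
      = (pd v (Wf A U) q * Hf A U q - Wf A U q * pd v (Hf A U) q) / (Hf A U q)^2 :=
    pd_div hdW hdH hHne v
  have e3 : pd v (fun r => a * Hf A U r / 2) q
      = ((a * pd v (Hf A U) q) * 2 - (a * Hf A U q) * 0) / (2:ℝ)^2 := by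
    rw [pd_div ((differentiableAt_const a).fun_mul hdH) (differentiableAt_const 2)
      (by norm_num) v, pd_const_mul hdH a, pd_const]
  have e4 : pd v (fun r => a * Real.log A / (2 * Hf A U r)) q
      = (0 * (2 * Hf A U q) - (a * Real.log A) * (2 * pd v (Hf A U) q)) / (2 * Hf A U q)^2 := by
    rw [pd_div (differentiableAt_const _) ((differentiableAt_const (2:ℝ)).fun_mul hdH) h2ne v,
      pd_const_mul hdH 2, pd_const]
  show pd v (fun r => -(2 * Hf A U r * Wf A U r) + Wf A U r / Hf A U r + a * Hf A U r / 2
      - a * Real.log A / (2 * Hf A U r)) q = _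
  rw [pd_sub ((hd1.fun_add hd2).fun_add hd3) (diffAt_div (differentiableAt_const _)
      ((differentiableAt_const (2:ℝ)).fun_mul hdH) h2ne),
    pd_add (hd1.fun_add hd2) hd3, pd_add hd1 hd2, e1, e2, e3, e4]
  field_simp
  ring

variable (hpde : ∀ q ∈ s, pd tau U q
  = (∑ j, pd (eps j) (pd (eps j) U) q) + a * U q * Real.log (U q))

include hpde

lemma heatH : ∀ q ∈ s, pd tau (Hf A U) q
    = (∑ j, pd (eps j) (pd (eps j) (Hf A U)) q) + Gf a A U q := by
  intro q hq
  have hHpos := Hf_pos hs hA hU hUpos hUA q hq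
  have hHne : Hf A U q ≠ 0 := ne_of_gt hHpos
  have hUne : U q ≠ 0 := ne_of_gt (hUpos q hq)
  have hF2 : ∀ j : Fin n, pd (eps j) (Ff A U) q
      = 2 * Hf A U q * pd (eps j) (Hf A U) q := by
    intro j
    rw [dH hs hA hU hUpos hUA q hq (eps j)]
    field_simp
  have hU2 : ∀ j : Fin n, (pd (eps j) U q)^2 = (U q)^2 * (pd (eps j) (Ff A U) q)^2 := by
    intro j
    have h1 := dF hs hA hU hUpos hUA q hq (eps j)
    have h2 : pd (eps j) U q = -(U q * pd (eps j) (Ff A U) q) := by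
      rw [h1]; field_simp
    rw [h2]; ring
  have sumF2 : ∑ j, (pd (eps j) (Ff A U) q)^2 = 4 * (Hf A U q)^2 * Wf A U q := by
    have e : ∀ j ∈ Finset.univ, (pd (eps j) (Ff A U) q)^2
        = 4 * (Hf A U q)^2 * (pd (eps j) (Hf A U) q)^2 := fun j _ => by rw [hF2 j]; ring
    rw [Finset.sum_congr rfl e, ← Finset.mul_sum]
    simp only [Wf]
  have sumU2 : ∑ j, (pd (eps j) U q)^2
      = (U q)^2 * (4 * (Hf A U q)^2 * Wf A U q) := by
    rw [Finset.sum_congr rfl (fun j _ => hU2 j), ← Finset.mul_sum, sumF2]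
  have sum1 : ∑ j, pd (eps j) (pd (eps j) (Hf A U)) q
      = (∑ j, pd (eps j) (pd (eps j) (Ff A U)) q) / (2 * Hf A U q)
        - (4 * (Hf A U q)^2 * Wf A U q) / (4 * (Hf A U q)^3) := by
    rw [Finset.sum_congr rfl (fun j _ => dHH hs hA hU hUpos hUA q hq j),
      Finset.sum_sub_distrib, ← Finset.sum_div, ← Finset.sum_div, sumF2]
  have sum2 : ∑ j, pd (eps j) (pd (eps j) (Ff A U)) q
      = -((∑ j, pd (eps j) (pd (eps j) U) q) / U q)
        + ((U q)^2 * (4 * (Hf A U q)^2 * Wf A U q)) / (U q)^2 := by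
    rw [Finset.sum_congr rfl (fun j _ => dFF hs hA hU hUpos hUA q hq j),
      Finset.sum_add_distrib, ← Finset.sum_div, sumU2, Finset.sum_neg_distrib,
      ← Finset.sum_div]
  have hlogU : Real.log (U q) = Real.log A - (Hf A U q)^2 := by
    have h1 := Hf_sq hs hA hU hUpos hUA q hq
    simp only [Ff] at h1
    linarith
  have lhs1 : pd tau (Hf A U) q
      = -(((∑ j, pd (eps j) (pd (eps j) U) q)
          + a * U q * (Real.log A - (Hf A U q)^2)) / U q) / (2 * Hf A U q) := by
    rw [dH hs hA hU hUpos hUA q hq tau, dF hs hA hU hUpos hUA q hq tau,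
      hpde q hq, hlogU]
  rw [lhs1, sum1, sum2]
  simp only [Gf]
  field_simp
  ring

omit hs hA hU hUpos hUA hpde in
lemma key_alg (m : ℕ) (sq T : Fin m → Fin m → ℝ) (D G : Fin m → ℝ) :
    (∑ j, 2 * ∑ i, ((sq i j)^2 + D i * T i j)) - 2 * ∑ i, D i * ((∑ j, T i j) + G i)
      = 2 * (∑ j, ∑ i, (sq i j)^2) - 2 * ∑ i, D i * G i := by
  have h1 : ∑ j, 2 * ∑ i, ((sq i j)^2 + D i * T i j)
      = 2 * ∑ j, ∑ i, ((sq i j)^2 + D i * T i j) := (Finset.mul_sum _ _ _).symm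
  have h2 : ∑ j, ∑ i, ((sq i j)^2 + D i * T i j)
      = (∑ j, ∑ i, (sq i j)^2) + ∑ i, D i * ∑ j, T i j := by
    simp only [Finset.sum_add_distrib]
    congr 1
    rw [Finset.sum_comm]
    exact Finset.sum_congr rfl fun i _ => (Finset.mul_sum _ _ _).symm
  have h3 : ∑ i, D i * ((∑ j, T i j) + G i)
      = (∑ i, D i * ∑ j, T i j) + ∑ i, D i * G i := by
    simp only [mul_add, Finset.sum_add_distrib]
  rw [h1, h2, h3]
  ring

theorem core_ineq {q : (EuclideanSpace ℝ (Fin n)) × ℝ} (hq : q ∈ s) :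
    (∑ j, pd (eps j) (pd (eps j) (Wf A U)) q) - pd tau (Wf A U) q ≥
      -(max a 0 + 1 / (Hf A U q) ^ 2 * max (a * Real.log A) 0) * Wf A U q +
        2 * (2 * Hf A U q - 1 / Hf A U q) *
          (∑ i, pd (eps i) (Wf A U) q * pd (eps i) (Hf A U) q) +
        2 * (2 + 1 / (Hf A U q) ^ 2) * (Wf A U q) ^ 2 := by
  have hHsm := Hf_smooth hs hA hU hUpos hUA
  have hWsm := Wf_smooth hs hA hU hUpos hUA
  have hGsm := Gf_smooth (a := a) hs hA hU hUpos hUA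
  have hHpos := Hf_pos hs hA hU hUpos hUA q hq
  have Dsm : ∀ i : Fin n, ContDiffOn ℝ (⊤ : ℕ∞) (pd (eps i) (Hf A U)) s :=
    fun i => hHsm.pd hs (eps i)
  have DDsm : ∀ i j : Fin n,
      ContDiffOn ℝ (⊤ : ℕ∞) (pd (eps j) (pd (eps i) (Hf A U))) s :=
    fun i j => (Dsm i).pd hs (eps j)
  -- second spatial derivatives of W
  have ddW : ∀ j : Fin n, pd (eps j) (pd (eps j) (Wf A U)) q
      = 2 * ∑ i, ((pd (eps j) (pd (eps i) (Hf A U)) q)^2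
        + pd (eps i) (Hf A U) q * pd (eps j) (pd (eps j) (pd (eps i) (Hf A U))) q) := by
    intro j
    have hev : (pd (eps j) (Wf A U)) =ᶠ[𝓝 q]
        (fun r => 2 * ∑ i, pd (eps i) (Hf A U) r * pd (eps j) (pd (eps i) (Hf A U)) r) :=
      Filter.eventuallyEq_of_mem (hs.mem_nhds hq)
        (fun r hr => dW hs hA hU hUpos hUA r hr (eps j))
    have hdprod : ∀ i : Fin n, DifferentiableAt ℝ
        (fun r => pd (eps i) (Hf A U) r * pd (eps j) (pd (eps i) (Hf A U)) r) q := fun i =>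
      (contDiffOn_diffAt (Dsm i) hs hq).mul (contDiffOn_diffAt (DDsm i j) hs hq)
    have hdsum : DifferentiableAt ℝ
        (fun r => ∑ i, pd (eps i) (Hf A U) r * pd (eps j) (pd (eps i) (Hf A U)) r) q :=
      DifferentiableAt.fun_sum (fun i _ => hdprod i)
    rw [pd_congr hev, pd_const_mul hdsum 2, pd_sum Finset.univ (fun i _ => hdprod i)]
    congr 1
    refine Finset.sum_congr rfl fun i _ => ?_
    rw [pd_mul (contDiffOn_diffAt (Dsm i) hs hq) (contDiffOn_diffAt (DDsm i j) hs hq)]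
    ring
  -- symmetry of derivatives
  have swap3 : ∀ i j : Fin n, pd (eps j) (pd (eps j) (pd (eps i) (Hf A U))) q
      = pd (eps i) (pd (eps j) (pd (eps j) (Hf A U))) q := by
    intro i j
    have hev : (pd (eps j) (pd (eps i) (Hf A U))) =ᶠ[𝓝 q]
        (pd (eps i) (pd (eps j) (Hf A U))) :=
      Filter.eventuallyEq_of_mem (hs.mem_nhds hq)
        (fun r hr => pd_comm hHsm hs hr (eps i) (eps j))
    rw [pd_congr hev]
    exact pd_comm (hHsm.pd hs (eps j)) hs hq (eps i) (eps j)
  have swapt : ∀ i : Fin n, pd tau (pd (eps i) (Hf A U)) q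
      = pd (eps i) (pd tau (Hf A U)) q := fun i => pd_comm hHsm hs hq (eps i) tau
  -- differentiating the evolution equation of H
  have hevheat : (pd tau (Hf A U)) =ᶠ[𝓝 q]
      (fun r => (∑ j, pd (eps j) (pd (eps j) (Hf A U)) r) + Gf a A U r) :=
    Filter.eventuallyEq_of_mem (hs.mem_nhds hq)
      (fun r hr => heatH hs hA hU hUpos hUA hpde r hr)
  have hdsum2 : DifferentiableAt ℝ
      (fun r => ∑ j, pd (eps j) (pd (eps j) (Hf A U)) r) q :=
    DifferentiableAt.fun_sum (fun j _ => contDiffOn_diffAt (DDsm j j) hs hq)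
  have hdG : DifferentiableAt ℝ (Gf a A U) q := contDiffOn_diffAt hGsm hs hq
  have dheat : ∀ i : Fin n, pd (eps i) (pd tau (Hf A U)) q
      = (∑ j, pd (eps i) (pd (eps j) (pd (eps j) (Hf A U))) q)
        + pd (eps i) (Gf a A U) q := by
    intro i
    rw [pd_congr hevheat (eps i), pd_add hdsum2 hdG,
      pd_sum Finset.univ (fun j _ => contDiffOn_diffAt (DDsm j j) hs hq)]
  -- assembling
  have ddW' : ∀ j : Fin n, pd (eps j) (pd (eps j) (Wf A U)) q
      = 2 * ∑ i, ((pd (eps j) (pd (eps i) (Hf A U)) q)^2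
        + pd (eps i) (Hf A U) q
          * pd (eps i) (pd (eps j) (pd (eps j) (Hf A U))) q) := fun j =>
    (ddW j).trans (by rw [Finset.sum_congr rfl fun i _ => by rw [swap3 i j]])
  have tW : pd tau (Wf A U) q
      = 2 * ∑ i, pd (eps i) (Hf A U) q
          * ((∑ j, pd (eps i) (pd (eps j) (pd (eps j) (Hf A U))) q)
            + pd (eps i) (Gf a A U) q) :=
    (dW hs hA hU hUpos hUA q hq tau).trans
      (by rw [Finset.sum_congr rfl fun i _ => by rw [swapt i, dheat i]])
  have key : (∑ j, pd (eps j) (pd (eps j) (Wf A U)) q) - pd tau (Wf A U) q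
      = 2 * (∑ j, ∑ i, (pd (eps j) (pd (eps i) (Hf A U)) q)^2)
        - 2 * ∑ i, pd (eps i) (Hf A U) q * pd (eps i) (Gf a A U) q := by
    rw [Finset.sum_congr rfl fun j _ => ddW' j, tW]
    exact key_alg n (fun i j => pd (eps j) (pd (eps i) (Hf A U)) q)
      (fun i j => pd (eps i) (pd (eps j) (pd (eps j) (Hf A U))) q)
      (fun i => pd (eps i) (Hf A U) q) (fun i => pd (eps i) (Gf a A U) q)
  -- the gradient term
  have sumDG : ∑ i, pd (eps i) (Hf A U) q * pd (eps i) (Gf a A U) q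
      = (-(2 * Wf A U q) - Wf A U q / (Hf A U q)^2 + a / 2
          + a * Real.log A / 2 * (1 / (Hf A U q)^2)) * Wf A U q
        + (-(2 * Hf A U q) + 1 / Hf A U q)
          * ∑ i, pd (eps i) (Wf A U) q * pd (eps i) (Hf A U) q := by
    have hWq : Wf A U q = ∑ i, (pd (eps i) (Hf A U) q)^2 := rfl
    rw [Finset.sum_congr rfl fun i _ => by rw [dG hs hA hU hUpos hUA q hq (eps i)]]
    have split : ∀ (Al Be : ℝ), ∑ i, pd (eps i) (Hf A U) q
          * (Al * pd (eps i) (Hf A U) q + Be * pd (eps i) (Wf A U) q)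
        = Al * (∑ i, (pd (eps i) (Hf A U) q)^2)
          + Be * (∑ i, pd (eps i) (Wf A U) q * pd (eps i) (Hf A U) q) := by
      intro Al Be
      rw [Finset.mul_sum, Finset.mul_sum, ← Finset.sum_add_distrib]
      exact Finset.sum_congr rfl fun i _ => by ring
    rw [split, ← hWq]
  have hWnn : 0 ≤ Wf A U q := Finset.sum_nonneg fun i _ => sq_nonneg _
  have hQnn : 0 ≤ ∑ j, ∑ i, (pd (eps j) (pd (eps i) (Hf A U)) q)^2 :=
    Finset.sum_nonneg fun j _ => Finset.sum_nonneg fun i _ => sq_nonneg _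
  have h1 : 0 ≤ (max a 0 - a) * Wf A U q :=
    mul_nonneg (sub_nonneg.2 (le_max_left a 0)) hWnn
  have h2 : 0 ≤ 1 / (Hf A U q)^2
      * ((max (a * Real.log A) 0 - a * Real.log A) * Wf A U q) :=
    mul_nonneg (by positivity) (mul_nonneg (sub_nonneg.2 (le_max_left _ 0)) hWnn)
  rw [ge_iff_le, ← sub_nonneg, key, sumDG]
  ring_nf at h1 h2 ⊢
  linarith [hQnn, h1, h2]

end core

/-- Differential inequality for `w = |∇h|²` (Lemma 2.1 of the paper with `K = 0`). -/
theorem differential_inequality_w (n : ℕ) (hn : 1 ≤ n) (a A : ℝ) (hA : 0 < A)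
    (Ω : Set (EuclideanSpace ℝ (Fin n))) (I : Set ℝ)
    (hΩ : IsOpen Ω) (hIopen : IsOpen I) (hIconn : I.OrdConnected)
    (u : EuclideanSpace ℝ (Fin n) → ℝ → ℝ)
    (hsmooth : ContDiffOn ℝ (⊤ : ℕ∞) (fun p => u p.1 p.2) (Ω ×ˢ I))
    (hbound : ∀ x ∈ Ω, ∀ t ∈ I, 0 < u x t ∧ u x t < A)
    (heq : ∀ x ∈ Ω, ∀ t ∈ I,
      deriv (u x) t = lapl (fun y => u y t) x + a * u x t * Real.log (u x t)) :
    ∀ x ∈ Ω, ∀ t ∈ I,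
      lapl (fun y => wfun A u y t) x - deriv (wfun A u x) t ≥
        -(max a 0 + 1 / (hfun A u x t) ^ 2 * max (a * Real.log A) 0) * wfun A u x t +
          2 * (2 * hfun A u x t - 1 / hfun A u x t) *
            ⟪gradient (fun y => wfun A u y t) x, gradient (fun y => hfun A u y t) x⟫ +
          2 * (2 + 1 / (hfun A u x t) ^ 2) * (wfun A u x t) ^ 2 := by
  intro x hx t ht
  set U : (EuclideanSpace ℝ (Fin n)) × ℝ → ℝ := fun q => u q.1 q.2 with hUdef
  have hsOpen : IsOpen (Ω ×ˢ I) := hΩ.prod hIopen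
  have hU : ContDiffOn ℝ (⊤ : ℕ∞) U (Ω ×ˢ I) := hsmooth.of_le (by simp)
  have hUpos : ∀ q ∈ Ω ×ˢ I, 0 < U q := fun q hq => (hbound q.1 hq.1 q.2 hq.2).1
  have hUA : ∀ q ∈ Ω ×ˢ I, U q < A := fun q hq => (hbound q.1 hq.1 q.2 hq.2).2
  have hp : ((x, t) : (EuclideanSpace ℝ (Fin n)) × ℝ) ∈ Ω ×ˢ I := ⟨hx, ht⟩
  -- the PDE in product-space form
  have hpde : ∀ q ∈ Ω ×ˢ I, pd tau U q
      = (∑ j, pd (eps j) (pd (eps j) U) q) + a * U q * Real.log (U q) := by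
    intro q hq
    have h1 : deriv (u q.1) q.2 = pd tau U q := by
      have h := deriv_slice_snd (G := U) (x := q.1) (t := q.2)
        (contDiffOn_diffAt hU hsOpen (by simpa using hq))
      simpa [tau] using h
    have h2 : lapl (fun y => u y q.2) q.1 = ∑ j, pd (eps j) (pd (eps j) U) q := by
      have h := lapl_slice hsOpen hU (x := q.1) (t := q.2) (by simpa using hq)
        (Filter.Eventually.of_forall fun y => rfl)
      simpa [eps] using h
    rw [← h1, ← h2, heq q.1 hq.1 q.2 hq.2]
  -- identification of hfun with Hf
  have hfH : ∀ q ∈ Ω ×ˢ I, hfun A u q.1 q.2 = Hf A U q := by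
    intro q hq
    simp only [hfun, Hf, Ff]
    rw [Real.log_div (ne_of_gt hA) (ne_of_gt (hUpos q hq))]
  -- identification of wfun with Wf
  have wfW : ∀ q ∈ Ω ×ˢ I, wfun A u q.1 q.2 = Wf A U q := by
    intro q hq
    have hsl : IsOpen {y : EuclideanSpace ℝ (Fin n) | (y, q.2) ∈ Ω ×ˢ I} :=
      hsOpen.preimage (continuous_id.prodMk continuous_const)
    have hmem : q.1 ∈ {y : EuclideanSpace ℝ (Fin n) | (y, q.2) ∈ Ω ×ˢ I} := by
      simpa using hq
    have hev : (fun y => hfun A u y q.2) =ᶠ[𝓝 q.1] (fun y => Hf A U (y, q.2)) :=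
      Filter.eventuallyEq_of_mem (hsl.mem_nhds hmem) (fun y hy => hfH (y, q.2) hy)
    simp only [wfun]
    rw [norm_sq_gradient]
    simp only [Wf]
    refine Finset.sum_congr rfl fun i _ => ?_
    rw [hev.fderiv_eq]
    have h := pd_slice_fst (G := Hf A U) (x := q.1) (t := q.2)
      (contDiffOn_diffAt (Hf_smooth hsOpen hA hU hUpos hUA) hsOpen (by simpa using hq))
      (EuclideanSpace.single i 1)
    rw [h]
    simp [eps]
  -- eventual equality for the spatial slice of w at time t
  have hslx : IsOpen {y : EuclideanSpace ℝ (Fin n) | (y, t) ∈ Ω ×ˢ I} :=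
    hsOpen.preimage (continuous_id.prodMk continuous_const)
  have hmemx : x ∈ {y : EuclideanSpace ℝ (Fin n) | (y, t) ∈ Ω ×ˢ I} := hp
  have hevW : (fun y => wfun A u y t) =ᶠ[𝓝 x] (fun y => Wf A U (y, t)) :=
    Filter.eventuallyEq_of_mem (hslx.mem_nhds hmemx) (fun y hy => wfW (y, t) hy)
  have hevH : (fun y => hfun A u y t) =ᶠ[𝓝 x] (fun y => Hf A U (y, t)) :=
    Filter.eventuallyEq_of_mem (hslx.mem_nhds hmemx) (fun y hy => hfH (y, t) hy)
  -- the three conversions in the goal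
  have glapl : lapl (fun y => wfun A u y t) x
      = ∑ j, pd (eps j) (pd (eps j) (Wf A U)) (x, t) := by
    have h := lapl_slice hsOpen (Wf_smooth hsOpen hA hU hUpos hUA) hp hevW
    simpa [eps] using h
  have gderiv : deriv (wfun A u x) t = pd tau (Wf A U) (x, t) := by
    have hslt : IsOpen {r : ℝ | ((x, r) : (EuclideanSpace ℝ (Fin n)) × ℝ) ∈ Ω ×ˢ I} :=
      hsOpen.preimage (continuous_const.prodMk continuous_id)
    have hmemt : t ∈ {r : ℝ | ((x, r) : (EuclideanSpace ℝ (Fin n)) × ℝ) ∈ Ω ×ˢ I} := hp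
    have hev2 : (wfun A u x) =ᶠ[𝓝 t] (fun r => Wf A U (x, r)) :=
      Filter.eventuallyEq_of_mem (hslt.mem_nhds hmemt) (fun r hr => wfW (x, r) hr)
    rw [hev2.deriv_eq]
    have h := deriv_slice_snd (G := Wf A U) (x := x) (t := t)
      (contDiffOn_diffAt (Wf_smooth hsOpen hA hU hUpos hUA) hsOpen hp)
    simpa [tau] using h
  have ginner : ⟪gradient (fun y => wfun A u y t) x, gradient (fun y => hfun A u y t) x⟫
      = ∑ i, pd (eps i) (Wf A U) (x, t) * pd (eps i) (Hf A U) (x, t) := by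
    rw [inner_gradient_gradient]
    refine Finset.sum_congr rfl fun i _ => ?_
    rw [hevW.fderiv_eq, hevH.fderiv_eq,
      pd_slice_fst (contDiffOn_diffAt (Wf_smooth hsOpen hA hU hUpos hUA) hsOpen hp) _,
      pd_slice_fst (contDiffOn_diffAt (Hf_smooth hsOpen hA hU hUpos hUA) hsOpen hp) _]
    simp [eps]
  have ghf : hfun A u x t = Hf A U (x, t) := hfH (x, t) hp
  have gwf : wfun A u x t = Wf A U (x, t) := wfW (x, t) hp
  rw [glapl, gderiv, ginner, ghf, gwf]
  exact core_ineq hsOpen hA hU hUpos hUA hpde hp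
end
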